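/- Consider the ℤ²-graded ring S = K[u][x,y,z]/(yz − ux) over a field K, where deg(x) = e₁+e₂, deg(y) = e₁, deg(z) = e₂, deg(u) = 0, so S_0 = K[u]. Then x is not a relevant element of S, but the image of x in R = S ⊗_{K[u]} K(u) is relevant. -/
import Mathlib


open scoped TensorProduct
open MvPolynomial

/-- A homogeneous element `f` of a ring with pieces indexed by `D` is *relevant* if the
degrees of all homogeneous divisors of powers of `f` generate a finite-index subgroup
of `D`. -/
def RelevantDiv {D A : Type*} [AddCommGroup D] [CommRing A]
    (𝒜 : D → AddSubgroup A) (f : A) : Prop :=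
  (∃ d, f ∈ 𝒜 d) ∧
    (AddSubgroup.closure {d : D | ∃ g ∈ 𝒜 d, ∃ n : ℕ, g ∣ f ^ n}).FiniteIndex

noncomputable section

variable (K : Type*) [Field K]

/-- The weights: `deg x = e₁ + e₂`, `deg y = e₁`, `deg z = e₂`, `deg u = 0`,
with the variables `x, y, z, u` being `X 0, X 1, X 2, X 3`. -/
def w11 : Fin 4 → ℤ × ℤ := ![(1, 1), (1, 0), (0, 1), (0, 0)]

/-- The ideal `(yz - ux)`. -/
abbrev I11 : Ideal (MvPolynomial (Fin 4) K) :=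
  Ideal.span {X 1 * X 2 - X 3 * X 0}

/-- The ring `S = K[u][x,y,z]/(yz - ux)`. -/
abbrev Ring11 := MvPolynomial (Fin 4) K ⧸ I11 K

/-- The `ℤ²`-grading on `S` induced by the weights `w11` (the relation `yz - ux` is
homogeneous of degree `(1,1)`). -/
def grading11 (d : ℤ × ℤ) : AddSubgroup (Ring11 K) :=
  AddSubgroup.map (Ideal.Quotient.mk (I11 K)).toAddMonoidHom
    (weightedHomogeneousSubmodule K (w11) d).toAddSubgroup

/-- `S` as a `K[u]`-algebra, `u` being the image of `X 3`. -/
instance : Algebra (Polynomial K) (Ring11 K) :=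
  (Polynomial.aeval (Ideal.Quotient.mk (I11 K) (X 3)) :
    Polynomial K →ₐ[K] Ring11 K).toRingHom.toAlgebra

/-- The induced `ℤ²`-grading on the base change `R = S ⊗_{K[u]} K(u)`. -/
def grading11R (d : ℤ × ℤ) : AddSubgroup (Ring11 K ⊗[Polynomial K] RatFunc K) :=
  AddSubgroup.closure {x | ∃ s ∈ grading11 K d, ∃ a : RatFunc K, x = s ⊗ₜ a}

end

/-! ### Auxiliary lemmas -/

section Aux

variable {R : Type*} [CommSemiring R] {σ τ M N : Type*} [AddCommMonoid M] [AddCommMonoid N]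

lemma whom_pow {v : τ → N} {p : MvPolynomial τ R} {m : N}
    (h : IsWeightedHomogeneous v p m) (k : ℕ) :
    IsWeightedHomogeneous v (p ^ k) (k • m) := by
  induction k with
  | zero => simpa using isWeightedHomogeneous_one R v
  | succ k ih => rw [pow_succ, succ_nsmul]; exact ih.mul h

lemma whom_aeval (w : σ → M) (v : τ → N) (φ : M →+ N) (f : σ → MvPolynomial τ R)
    (hf : ∀ i, IsWeightedHomogeneous v (f i) (φ (w i)))
    {G : MvPolynomial σ R} {d : M} (hG : IsWeightedHomogeneous w G d) :
    IsWeightedHomogeneous v (aeval f G) (φ d) := by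
  classical
  have hsum : aeval f G = ∑ m ∈ G.support, aeval f (monomial m (coeff m G)) := by
    rw [← map_sum, support_sum_monomial_coeff]
  rw [hsum]
  apply IsWeightedHomogeneous.sum
  intro m hm
  rw [aeval_monomial]
  have h1 : IsWeightedHomogeneous v (algebraMap R (MvPolynomial τ R) (coeff m G)) 0 := by
    rw [MvPolynomial.algebraMap_eq]; exact isWeightedHomogeneous_C v _
  have h2 : IsWeightedHomogeneous v (m.prod fun i k => f i ^ k)
      (∑ i ∈ m.support, m i • φ (w i)) := by
    rw [Finsupp.prod]
    exact IsWeightedHomogeneous.prod m.support _ _ fun i _ => whom_pow (hf i) (m i)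
  have h3 : (∑ i ∈ m.support, m i • φ (w i)) = φ d := by
    rw [← hG (mem_support_iff.mp hm)]
    rw [Finsupp.weight_apply, Finsupp.sum, map_sum]
    exact Finset.sum_congr rfl fun i _ => (map_nsmul φ _ _).symm
  simpa [h3] using h1.mul h2

lemma supp_nonneg_aeval (v : τ → ℤ) (f : σ → MvPolynomial τ R)
    (hf : ∀ i, ∀ m ∈ (f i).support, 0 ≤ Finsupp.weight v m) (G : MvPolynomial σ R) :
    ∀ m ∈ (aeval f G).support, 0 ≤ Finsupp.weight v m := by
  classical
  induction G using MvPolynomial.induction_on with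
  | C a =>
    intro m hm
    rw [aeval_C, MvPolynomial.algebraMap_eq, mem_support_iff, coeff_C] at hm
    split_ifs at hm with h
    · rw [← h, map_zero]
    · exact absurd rfl hm
  | add p q hp hq =>
    intro m hm
    rw [map_add] at hm
    rcases Finset.mem_union.mp (MvPolynomial.support_add hm) with h | h
    · exact hp m h
    · exact hq m h
  | mul_X p i hp =>
    intro m hm
    rw [map_mul, aeval_X] at hm
    rcases Finset.mem_add.mp (MvPolynomial.support_mul _ _ hm) with ⟨m1, hm1, m2, hm2, rfl⟩
    rw [map_add]
    exact add_nonneg (hp m1 hm1) (hf i m2 hm2)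

lemma supp_nonneg_of_whom {v : τ → ℤ} {p : MvPolynomial τ R} {c : ℤ}
    (h : IsWeightedHomogeneous v p c) (hc : 0 ≤ c) :
    ∀ m ∈ p.support, 0 ≤ Finsupp.weight v m := fun m hm =>
  (h (mem_support_iff.mp hm)) ▸ hc

end Aux

section Key

variable (K : Type*) [Field K]

/-- One half of the degree estimate. -/
lemma half11 (v : Fin 2 → ℤ) (φ : ℤ × ℤ →+ ℤ) (f : Fin 4 → MvPolynomial (Fin 2) K)
    (hf : ∀ i, IsWeightedHomogeneous v (f i) (φ (w11 i)))
    (hpos : ∀ i, ∀ m ∈ (f i).support, 0 ≤ Finsupp.weight v m)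
    (hrel : f 1 * f 2 - f 3 * f 0 = 0) (hx : f 0 ≠ 0)
    {G H Q : MvPolynomial (Fin 4) K} {n : ℕ} {d : ℤ × ℤ}
    (hG : IsWeightedHomogeneous w11 G d)
    (heq : G * H = X 0 ^ n + (X 1 * X 2 - X 3 * X 0) * Q) :
    0 ≤ φ d := by
  have happ := congrArg (aeval f) heq
  simp only [map_mul, map_add, map_sub, map_pow, aeval_X, hrel, zero_mul, add_zero] at happ
  have hGne : aeval f G ≠ 0 := by
    intro h0
    rw [h0, zero_mul] at happ
    exact pow_ne_zero n hx happ.symm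
  obtain ⟨m, hm⟩ := MvPolynomial.ne_zero_iff.mp hGne
  have hdeg := whom_aeval w11 v φ f hf hG hm
  have := supp_nonneg_aeval v f hpos G m (mem_support_iff.mpr hm)
  rwa [hdeg] at this

lemma key11 {G H Q : MvPolynomial (Fin 4) K} {n : ℕ} {d : ℤ × ℤ}
    (hG : IsWeightedHomogeneous w11 G d)
    (heq : G * H = X 0 ^ n + (X 1 * X 2 - X 3 * X 0) * Q) :
    d.1 = d.2 := by
  have h1 : 0 ≤ ((AddMonoidHom.snd ℤ ℤ) - (AddMonoidHom.fst ℤ ℤ)) d := by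
    refine half11 K ![(-1 : ℤ), 1] _ ![X 0 * X 1, 0, X 1, 0] ?_ ?_ (by simp) ?_ hG heq
    · intro i
      fin_cases i
      · have := (isWeightedHomogeneous_X K ![(-1 : ℤ), 1] 0).mul
          (isWeightedHomogeneous_X K ![(-1 : ℤ), 1] 1)
        simpa [w11] using this
      · simpa [w11] using isWeightedHomogeneous_zero K ![(-1 : ℤ), 1] _
      · simpa [w11] using isWeightedHomogeneous_X K ![(-1 : ℤ), 1] 1
      · simpa [w11] using isWeightedHomogeneous_zero K ![(-1 : ℤ), 1] _
    · intro i
      fin_cases i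
      · exact supp_nonneg_of_whom ((isWeightedHomogeneous_X K ![(-1 : ℤ), 1] 0).mul
          (isWeightedHomogeneous_X K ![(-1 : ℤ), 1] 1)) (by norm_num)
      · simp
      · exact supp_nonneg_of_whom (isWeightedHomogeneous_X K ![(-1 : ℤ), 1] 1) (by norm_num)
      · simp
    · exact mul_ne_zero (X_ne_zero 0) (X_ne_zero 1)
  have h2 : 0 ≤ ((AddMonoidHom.fst ℤ ℤ) - (AddMonoidHom.snd ℤ ℤ)) d := by
    refine half11 K ![(1 : ℤ), -1] _ ![X 0 * X 1, X 0, 0, 0] ?_ ?_ (by simp) ?_ hG heq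
    · intro i
      fin_cases i
      · have := (isWeightedHomogeneous_X K ![(1 : ℤ), -1] 0).mul
          (isWeightedHomogeneous_X K ![(1 : ℤ), -1] 1)
        simpa [w11] using this
      · simpa [w11] using isWeightedHomogeneous_X K ![(1 : ℤ), -1] 0
      · simpa [w11] using isWeightedHomogeneous_zero K ![(1 : ℤ), -1] _
      · simpa [w11] using isWeightedHomogeneous_zero K ![(1 : ℤ), -1] _
    · intro i
      fin_cases i
      · exact supp_nonneg_of_whom ((isWeightedHomogeneous_X K ![(1 : ℤ), -1] 0).mul
          (isWeightedHomogeneous_X K ![(1 : ℤ), -1] 1)) (by norm_num)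
      · exact supp_nonneg_of_whom (isWeightedHomogeneous_X K ![(1 : ℤ), -1] 0) (by norm_num)
      · simp
      · simp
    · exact mul_ne_zero (X_ne_zero 0) (X_ne_zero 1)
  have h1' : (0 : ℤ) ≤ d.2 - d.1 := h1
  have h2' : (0 : ℤ) ≤ d.1 - d.2 := h2
  omega

end Key

set_option maxHeartbeats 1000000 in
set_option synthInstance.maxHeartbeats 400000 in
/-- In `S = K[u][x,y,z]/(yz - ux)` with the `ℤ²`-grading
`deg x = e₁+e₂`, `deg y = e₁`, `deg z = e₂`, the element `x` is not relevant, but its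
image in `R = S ⊗_{K[u]} K(u)` is relevant. -/
theorem stmt_11 (K : Type*) [Field K] :
    ¬ RelevantDiv (grading11 K) (Ideal.Quotient.mk (I11 K) (X 0)) ∧
      RelevantDiv (grading11R K)
        ((Ideal.Quotient.mk (I11 K) (X 0)) ⊗ₜ[Polynomial K] (1 : RatFunc K)) := by
  constructor
  · -- x is not relevant in S
    rintro ⟨-, hfin⟩
    set φ0 : ℤ × ℤ →+ ℤ := (AddMonoidHom.fst ℤ ℤ) - (AddMonoidHom.snd ℤ ℤ) with hφ0
    have hsub : {d : ℤ × ℤ | ∃ g ∈ grading11 K d, ∃ n : ℕ,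
        g ∣ (Ideal.Quotient.mk (I11 K) (X 0)) ^ n} ⊆ (φ0.ker : Set (ℤ × ℤ)) := by
      rintro d ⟨g, hg, n, h, hh⟩
      obtain ⟨G, hGmem, hGeq⟩ := AddSubgroup.mem_map.mp hg
      obtain ⟨H, rfl⟩ := Ideal.Quotient.mk_surjective h
      have hGwhom : IsWeightedHomogeneous w11 G d := hGmem
      have hGeq' : Ideal.Quotient.mk (I11 K) G = g := hGeq
      have hmk : Ideal.Quotient.mk (I11 K) (G * H) =
          Ideal.Quotient.mk (I11 K) (X 0 ^ n) := by
        rw [map_mul, map_pow, hGeq']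
        exact hh.symm
      obtain ⟨Q, hQ⟩ := Ideal.mem_span_singleton.mp (Ideal.Quotient.eq.mp hmk)
      have heq : G * H = X 0 ^ n + (X 1 * X 2 - X 3 * X 0) * Q := by
        linear_combination hQ
      have hd := key11 K hGwhom heq
      have : φ0 d = 0 := by
        show d.1 - d.2 = 0
        omega
      exact this
    have hle := (AddSubgroup.closure_le _).mpr hsub
    haveI := hfin
    haveI : φ0.ker.FiniteIndex := AddSubgroup.finiteIndex_of_le hle
    have hinf : Infinite ((ℤ × ℤ) ⧸ φ0.ker) := by
      refine Infinite.of_injective (fun k : ℤ => QuotientAddGroup.mk ((k, 0) : ℤ × ℤ)) ?_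
      intro a b hab
      have h' := (QuotientAddGroup.eq).mp hab
      have h'' : (-((a : ℤ), (0 : ℤ)) + ((b : ℤ), (0 : ℤ))).1
          - (-((a : ℤ), (0 : ℤ)) + ((b : ℤ), (0 : ℤ))).2 = 0 := h'
      simp only [Prod.fst_add, Prod.snd_add, Prod.fst_neg, Prod.snd_neg] at h''
      omega
    have h0 := AddSubgroup.index_eq_zero_iff_infinite.mpr hinf
    exact (AddSubgroup.FiniteIndex.index_ne_zero (H := φ0.ker)) h0
  · -- x ⊗ 1 is relevant in R
    constructor
    · refine ⟨(1, 1), AddSubgroup.subset_closure ?_⟩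
      refine ⟨Ideal.Quotient.mk (I11 K) (X 0), ?_, 1, rfl⟩
      exact AddSubgroup.mem_map.mpr ⟨X 0, by simpa [w11] using isWeightedHomogeneous_X K w11 0, rfl⟩
    · set mk := Ideal.Quotient.mk (I11 K) with hmk
      set f := (mk (X 0)) ⊗ₜ[Polynomial K] (1 : RatFunc K) with hf
      set D := {d : ℤ × ℤ | ∃ g ∈ grading11R K d, ∃ n : ℕ, g ∣ f ^ n} with hD
      have hXX : (RatFunc.X : RatFunc K) * (RatFunc.X)⁻¹ = 1 :=
        mul_inv_cancel₀ RatFunc.X_ne_zero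
      have hyz : mk (X 1) * mk (X 2) = mk (X 3) * mk (X 0) := by
        rw [← map_mul, ← map_mul]
        exact Ideal.Quotient.eq.mpr (Ideal.subset_span (Set.mem_singleton _))
      have hu : mk (X 3) = algebraMap (Polynomial K) (Ring11 K) Polynomial.X := by
        show mk (X 3) = Polynomial.aeval (mk (X 3)) Polynomial.X
        rw [Polynomial.aeval_X]
      have hkey : ∀ a b : MvPolynomial (Fin 4) K, mk a * mk b = mk (X 3) * mk (X 0) →
          (mk a ⊗ₜ[Polynomial K] (1 : RatFunc K)) *
            (mk b ⊗ₜ[Polynomial K] (RatFunc.X : RatFunc K)⁻¹) = f := by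
        intro a b hab
        rw [Algebra.TensorProduct.tmul_mul_tmul, hab, hu, ← Algebra.smul_def,
          TensorProduct.smul_tmul (R := Polynomial K) (R' := Polynomial K)
            Polynomial.X (mk (X 0)) ((1 : RatFunc K) * (RatFunc.X)⁻¹),
          Algebra.smul_def, RatFunc.algebraMap_X, one_mul, hXX, hf]
      have hmemD : ∀ (i j : Fin 4), mk (X i) * mk (X j) = mk (X 3) * mk (X 0) →
          (w11 i) ∈ D := by
        intro i j hij
        refine ⟨mk (X i) ⊗ₜ[Polynomial K] (1 : RatFunc K), ?_, 1, ?_⟩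
        · exact AddSubgroup.subset_closure
            ⟨mk (X i), AddSubgroup.mem_map.mpr ⟨X i, isWeightedHomogeneous_X K w11 i, rfl⟩,
              1, rfl⟩
        · exact ⟨mk (X j) ⊗ₜ[Polynomial K] (RatFunc.X : RatFunc K)⁻¹,
            by rw [pow_one, (hkey _ _ hij)]⟩
      have hy : ((1 : ℤ), (0 : ℤ)) ∈ D := by
        have := hmemD 1 2 hyz
        simpa [w11] using this
      have hz : ((0 : ℤ), (1 : ℤ)) ∈ D := by
        have := hmemD 2 1 (by rw [mul_comm]; exact hyz)
        simpa [w11] using this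
      have htop : AddSubgroup.closure D = ⊤ := by
        rw [eq_top_iff]
        rintro ⟨p, q⟩ -
        have h1 := AddSubgroup.zsmul_mem _ (AddSubgroup.subset_closure hy) p
        have h2 := AddSubgroup.zsmul_mem _ (AddSubgroup.subset_closure hz) q
        have := AddSubgroup.add_mem _ h1 h2
        convert this using 1
        simp [Prod.ext_iff]
      rw [htop]
      exact ⟨by simp [AddSubgroup.index_top]⟩
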